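/- Let P(z)/Q(z) be the p/(p+1) Padé approximant of e^z. If error terms of the form ε(ξ,t) = c·R⁻_{p+1}(ξ) + ∑_{k=1}^{p} α_k R⁻⁽⁻ᵏ⁾_{p+1}(ξ) + ρ(ξ) are given with c = O(h^{p+1}), α_k = O(h^{p+1+k}), and ‖ρ‖ = O(h^{2p+2}), then for each m with 0 ≤ m ≤ p, the m-th moment satisfies ∫_{-1}^1 ε(ξ,t) P_m(ξ) dξ = O(h^{2p+1−m}). -/

import Mathlib

/-!
Integrating by parts `n` times against the Rodrigues formula shows that `P_n` is orthogonal to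
the polynomials of degree `< n`, hence `R⁻_{p+1} = P_{p+1} - P_p` to those of degree `< p`.
A primitive `F` (from `-1`) of a function orthogonal to the constants vanishes at both ends of
`[-1, 1]`, so one more integration by parts moves it onto an antiderivative of the test
polynomial: each antiderivative costs one degree of orthogonality, and
`∫ R⁻⁽⁻ᵏ⁾_{p+1} P_m = 0` whenever `k + m < p`. In the `m`-th moment only the terms with
`k ≥ p - m` survive, and their coefficients are `O(h^{p+1+k}) ⊆ O(h^{2p+1-m})`; the remainder
contributes `O(h^{2p+2})`.
-/

open Polynomial intervalIntegral

/-- The `k`-th Legendre polynomial, defined via the Rodrigues formula. -/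
noncomputable def leg (k : ℕ) : Polynomial ℝ :=
  C (1 / (2 ^ k * (k.factorial : ℝ))) * (fun q => derivative q)^[k] ((X ^ 2 - 1) ^ k)

/-- The right Radau polynomial `R⁻_{p+1} = P_{p+1} - P_p`. -/
noncomputable def radau (p : ℕ) : Polynomial ℝ := leg (p + 1) - leg p

/-- Iterated antiderivatives of the right Radau polynomial, with base point `-1`. -/
noncomputable def radauIter (p : ℕ) : ℕ → ℝ → ℝ
  | 0 => fun ξ => (radau p).eval ξ
  | (k + 1) => fun ξ => ∫ s in (-1 : ℝ)..ξ, radauIter p k s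

theorem Polynomial.exists_derivative_eq {R : Type*} [Field R] [CharZero R] (q : R[X]) :
    ∃ Q : R[X], derivative Q = q ∧ Q.natDegree ≤ q.natDegree + 1 := by
  refine ⟨∑ i ∈ Finset.range (q.natDegree + 1), C (q.coeff i / (i + 1)) * X ^ (i + 1), ?_,
    natDegree_sum_le_of_forall_le _ _ fun i hi => (natDegree_C_mul_X_pow_le _ _).trans ?_⟩
  · conv_rhs => rw [q.as_sum_range_C_mul_X_pow]
    simp only [derivative_sum, derivative_C_mul_X_pow, Nat.add_sub_cancel]
    refine Finset.sum_congr rfl fun i _ => ?_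
    push_cast
    field_simp
  · have := Finset.mem_range.1 hi
    omega

theorem integral_eval_mul_eval_iterate_derivative_eq_zero {a b : ℝ} {w : ℝ[X]} {n : ℕ}
    (hw : ∀ i < n, (derivative^[i] w).eval a = 0 ∧ (derivative^[i] w).eval b = 0)
    {q : ℝ[X]} (hq : q.natDegree < n) :
    ∫ x in a..b, q.eval x * (derivative^[n] w).eval x = 0 := by
  induction n generalizing q with
  | zero => omega
  | succ n ih =>
    have hderiv (x : ℝ) : HasDerivAt (fun x => (derivative^[n] w).eval x)
        ((derivative^[n + 1] w).eval x) x := by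
      rw [Function.iterate_succ_apply']
      exact (derivative^[n] w).hasDerivAt x
    have hq' : ∫ x in a..b, (derivative q).eval x * (derivative^[n] w).eval x = 0 := by
      by_cases hq0 : q.natDegree = 0
      · simp [derivative_of_natDegree_zero hq0]
      · exact ih (fun i hi => hw i (by omega)) ((natDegree_derivative_lt hq0).trans_le (by omega))
    rw [integral_mul_deriv_eq_deriv_mul (fun x _ => q.hasDerivAt x) (fun x _ => hderiv x)
      (q.derivative.continuous.intervalIntegrable _ _)
      ((derivative^[n + 1] w).continuous.intervalIntegrable _ _), hq',
      (hw n n.lt_succ_self).1, (hw n n.lt_succ_self).2]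
    ring

theorem eval_iterate_derivative_X_sq_sub_one_pow_eq_zero {n i : ℕ} (hi : i < n) {t : ℝ}
    (ht : t ^ 2 = 1) : (derivative^[i] (((X : ℝ[X]) ^ 2 - 1) ^ n)).eval t = 0 := by
  obtain ⟨g, hg⟩ := pow_sub_dvd_iterate_derivative_pow ((X : ℝ[X]) ^ 2 - 1) n i
  rw [hg, eval_mul, eval_pow, eval_sub, eval_pow, eval_X, eval_one, ht, sub_self,
    zero_pow (by omega), zero_mul]

theorem integral_eval_leg_mul_eq_zero {n : ℕ} {q : ℝ[X]} (hq : q.natDegree < n) :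
    ∫ x in (-1 : ℝ)..1, (leg n).eval x * q.eval x = 0 := by
  have hw (i : ℕ) (hi : i < n) :=
    And.intro (eval_iterate_derivative_X_sq_sub_one_pow_eq_zero hi (t := -1) (by norm_num))
      (eval_iterate_derivative_X_sq_sub_one_pow_eq_zero hi (t := 1) (by norm_num))
  have hleg (x : ℝ) : (leg n).eval x * q.eval x = 1 / (2 ^ n * (n.factorial : ℝ)) *
      (q.eval x * (derivative^[n] (((X : ℝ[X]) ^ 2 - 1) ^ n)).eval x) := by
    rw [leg, eval_mul, eval_C]
    ring
  simp only [hleg, integral_const_mul, integral_eval_mul_eval_iterate_derivative_eq_zero hw hq,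
    mul_zero]

theorem natDegree_leg_le (m : ℕ) : (leg m).natDegree ≤ m := by
  have hw : (((X : ℝ[X]) ^ 2 - 1) ^ m).natDegree ≤ m * 2 := by compute_degree
  exact (natDegree_C_mul_le _ _).trans ((natDegree_iterate_derivative _ _).trans (by omega))

theorem integral_eval_radau_mul_eq_zero {p : ℕ} {q : ℝ[X]} (hq : q.natDegree < p) :
    ∫ x in (-1 : ℝ)..1, (radau p).eval x * q.eval x = 0 := by
  simp only [radau, eval_sub, sub_mul]
  rw [integral_sub (Continuous.intervalIntegrable (by fun_prop) _ _)
    (Continuous.intervalIntegrable (by fun_prop) _ _),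
    integral_eval_leg_mul_eq_zero (by omega), integral_eval_leg_mul_eq_zero hq, sub_zero]

theorem integral_primitive_mul_eval_eq_zero {a b : ℝ} {f : ℝ → ℝ} (hf : Continuous f) {n : ℕ}
    (horth : ∀ q : ℝ[X], q.natDegree < n + 1 → ∫ x in a..b, f x * q.eval x = 0)
    {q : ℝ[X]} (hq : q.natDegree < n) :
    ∫ x in a..b, (∫ t in a..x, f t) * q.eval x = 0 := by
  obtain ⟨Q, rfl, hQ⟩ := q.exists_derivative_eq
  have hfb : ∫ t in a..b, f t = 0 := by simpa using horth 1 (by simp)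
  rw [integral_mul_deriv_eq_deriv_mul (fun x _ => (hf.integral_hasStrictDerivAt a x).hasDerivAt)
    (fun x _ => Q.hasDerivAt x) (hf.intervalIntegrable _ _)
    (Q.derivative.continuous.intervalIntegrable _ _), horth Q (by omega), hfb]
  simp

theorem continuous_radauIter (p k : ℕ) : Continuous (radauIter p k) := by
  induction k with
  | zero => exact (radau p).continuous
  | succ k ih => exact continuous_primitive (fun _ _ => ih.intervalIntegrable _ _) _

theorem integral_radauIter_mul_eq_zero {p k : ℕ} {q : ℝ[X]} (hq : k + q.natDegree < p) :
    ∫ x in (-1 : ℝ)..1, radauIter p k x * q.eval x = 0 := by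
  induction k generalizing q with
  | zero => exact integral_eval_radau_mul_eq_zero (by omega)
  | succ k ih =>
    exact integral_primitive_mul_eval_eq_zero (n := p - (k + 1)) (continuous_radauIter p k)
      (fun q' hq' => ih (by omega)) (by omega)

theorem abs_le_mul_pow_of_le {R : Type*} [Ring R] [LinearOrder R] [IsStrictOrderedRing R]
    {x A h : R} {i j : ℕ} (h0 : 0 < h) (h1 : h ≤ 1)
    (hx : |x| ≤ A * h ^ i) (hji : j ≤ i) : |x| ≤ A * h ^ j :=
  hx.trans <| mul_le_mul_of_nonneg_left (pow_le_pow_of_le_one h0.le h1 hji)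
    (nonneg_of_mul_nonneg_left ((abs_nonneg x).trans hx) (pow_pos h0 i))

theorem abs_integral_mul_le_of_abs_le {a b ε : ℝ} {ρ g : ℝ → ℝ} (hab : a ≤ b)
    (hρ : Continuous ρ) (hg : Continuous g) (hρε : ∀ x ∈ Set.Icc a b, |ρ x| ≤ ε) :
    |∫ x in a..b, ρ x * g x| ≤ ε * ∫ x in a..b, |g x| := by
  rw [← integral_const_mul]
  refine (abs_integral_le_integral_abs hab).trans <|
    integral_mono_on hab (Continuous.intervalIntegrable (by fun_prop) _ _)
      (Continuous.intervalIntegrable (by fun_prop) _ _) fun x hx => ?_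
  rw [abs_mul]
  exact mul_le_mul_of_nonneg_right (hρε x hx) (abs_nonneg _)

theorem integral_sum_mul_add_mul {ι : Type*} (s : Finset ι) (β : ι → ℝ) {a b : ℝ}
    {f : ι → ℝ → ℝ} {ρ g : ℝ → ℝ} (hf : ∀ k, Continuous (f k)) (hρ : Continuous ρ)
    (hg : Continuous g) :
    ∫ x in a..b, (∑ k ∈ s, β k * f k x + ρ x) * g x =
      ∑ k ∈ s, β k * (∫ x in a..b, f k x * g x) + ∫ x in a..b, ρ x * g x := by
  simp only [add_mul, Finset.sum_mul, mul_assoc]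
  rw [integral_add (Continuous.intervalIntegrable (by fun_prop) _ _)
      (Continuous.intervalIntegrable (by fun_prop) _ _),
    integral_finsetSum fun k _ => Continuous.intervalIntegrable (by fun_prop) _ _]
  simp only [integral_const_mul]

theorem sum_range_succ_ite_zero_mul {R : Type*} [Semiring R] (c : R) (α f : ℕ → R) (p : ℕ) :
    ∑ k ∈ Finset.range (p + 1), (if k = 0 then c else α k) * f k =
      c * f 0 + ∑ k ∈ Finset.Icc 1 p, α k * f k := by
  simp only [Finset.sum_range_succ', if_pos, Nat.add_one_ne_zero, if_false, add_comm (c * f 0)]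
  rw [Finset.range_eq_Ico, Finset.sum_Ico_add' (fun k => α k * f k), zero_add,
    Finset.Ico_add_one_right_eq_Icc]

noncomputable def radauMomentConst (p m : ℕ) : ℝ :=
  ∑ k ∈ Finset.range (p + 1), |∫ x in (-1 : ℝ)..1, radauIter p k x * (leg m).eval x| +
    ∫ x in (-1 : ℝ)..1, |(leg m).eval x|

theorem radauMomentConst_nonneg (p m : ℕ) : 0 ≤ radauMomentConst p m :=
  add_nonneg (Finset.sum_nonneg fun _ _ => abs_nonneg _)
    (integral_nonneg (by norm_num) fun _ _ => abs_nonneg _)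

theorem abs_integral_sum_radauIter_add_mul_leg_le {p m : ℕ} (hm : m ≤ p) {A h : ℝ}
    (h0 : 0 < h) (h1 : h ≤ 1) {β : ℕ → ℝ} {ρ : ℝ → ℝ} (hρc : Continuous ρ)
    (hβ : ∀ k ≤ p, |β k| ≤ A * h ^ (p + 1 + k))
    (hρ : ∀ ξ ∈ Set.Icc (-1 : ℝ) 1, |ρ ξ| ≤ A * h ^ (2 * p + 2)) :
    |∫ ξ in (-1 : ℝ)..1, (∑ k ∈ Finset.range (p + 1), β k * radauIter p k ξ + ρ ξ) *
        (leg m).eval ξ| ≤ A * radauMomentConst p m * h ^ (2 * p + 1 - m) := by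
  set I : ℕ → ℝ := fun k => ∫ x in (-1 : ℝ)..1, radauIter p k x * (leg m).eval x
  rw [integral_sum_mul_add_mul _ _ (continuous_radauIter p) hρc (leg m).continuous]
  -- The `k`-th term vanishes unless `k + m ≥ p`, which is exactly when `p + 1 + k ≥ 2p + 1 - m`.
  have hterm (k : ℕ) (hk : k ∈ Finset.range (p + 1)) :
      |β k * I k| ≤ A * h ^ (2 * p + 1 - m) * |I k| := by
    rw [abs_mul]
    by_cases hkm : k + m < p
    · have hIk : I k = 0 := integral_radauIter_mul_eq_zero (by linarith [natDegree_leg_le m])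
      rw [hIk, abs_zero, mul_zero, mul_zero]
    · exact mul_le_mul_of_nonneg_right
        (abs_le_mul_pow_of_le h0 h1 (hβ k (by simpa [Nat.lt_succ_iff] using hk)) (by omega))
        (abs_nonneg _)
  have hrem := abs_integral_mul_le_of_abs_le (by norm_num) hρc (leg m).continuous
    fun ξ hξ => abs_le_mul_pow_of_le h0 h1 (hρ ξ hξ) (by omega : 2 * p + 1 - m ≤ 2 * p + 2)
  calc _ ≤ ∑ k ∈ Finset.range (p + 1), |β k * I k| +
        |∫ x in (-1 : ℝ)..1, ρ x * (leg m).eval x| :=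
        (abs_add_le _ _).trans (add_le_add_left (Finset.abs_sum_le_sum_abs _ _) _)
    _ ≤ ∑ k ∈ Finset.range (p + 1), A * h ^ (2 * p + 1 - m) * |I k| +
        A * h ^ (2 * p + 1 - m) * ∫ x in (-1 : ℝ)..1, |(leg m).eval x| :=
        add_le_add (Finset.sum_le_sum hterm) hrem
    _ = A * radauMomentConst p m * h ^ (2 * p + 1 - m) := by
        rw [radauMomentConst, ← Finset.mul_sum]
        ring

theorem moments_of_superconvergent_error (p : ℕ) (A : ℝ) :
    ∃ C : ℝ, ∀ h : ℝ, 0 < h → h ≤ 1 → ∀ (c : ℝ) (α : ℕ → ℝ) (ρ : ℝ → ℝ),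
      Continuous ρ →
      |c| ≤ A * h ^ (p + 1) →
      (∀ k ∈ Finset.Icc 1 p, |α k| ≤ A * h ^ (p + 1 + k)) →
      (∀ ξ ∈ Set.Icc (-1 : ℝ) 1, |ρ ξ| ≤ A * h ^ (2 * p + 2)) →
      ∀ m ≤ p,
        |∫ ξ in (-1 : ℝ)..1,
            (c * (radau p).eval ξ + (∑ k ∈ Finset.Icc 1 p, α k * radauIter p k ξ) + ρ ξ) *
              (leg m).eval ξ| ≤ C * h ^ (2 * p + 1 - m) := by
  refine ⟨A * ∑ m ∈ Finset.range (p + 1), radauMomentConst p m, ?_⟩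
  intro h h0 h1 c α ρ hρc hc hα hρ m hm
  have hA : 0 ≤ A := nonneg_of_mul_nonneg_left ((abs_nonneg c).trans hc) (pow_pos h0 _)
  have hβ (k : ℕ) (hk : k ≤ p) : |if k = 0 then c else α k| ≤ A * h ^ (p + 1 + k) := by
    split_ifs with hk0
    · simpa [hk0] using hc
    · exact hα k (Finset.mem_Icc.2 ⟨Nat.one_le_iff_ne_zero.2 hk0, hk⟩)
  calc _ = |∫ ξ in (-1 : ℝ)..1, (∑ k ∈ Finset.range (p + 1),
          (if k = 0 then c else α k) * radauIter p k ξ + ρ ξ) * (leg m).eval ξ| := by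
        simp only [sum_range_succ_ite_zero_mul]
        rfl
    _ ≤ A * radauMomentConst p m * h ^ (2 * p + 1 - m) :=
        abs_integral_sum_radauIter_add_mul_leg_le hm h0 h1 hρc hβ hρ
    _ ≤ A * (∑ m ∈ Finset.range (p + 1), radauMomentConst p m) * h ^ (2 * p + 1 - m) := by
        gcongr
        exact Finset.single_le_sum (fun i _ => radauMomentConst_nonneg p i)
          (Finset.mem_range.2 (by omega))
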